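/- arXiv:1806.03763 — 2 statements merged into one kernel-verified Lean document; each statement's English description precedes it below -/
import Mathlib

section
/- Let 𝕂 = ℝ or ℂ, suppose 𝒞 is nonempty and compact, and let R be finite with tr(X) ≤ R for every X ∈ 𝒞. Let C, W ∈ S^{n×n}, let ε_f ≥ 0, and let X ∈ 𝒞 satisfy ⟨C+W, X⟩ ≤ min_{X' ∈ 𝒞} ⟨C+W, X'⟩ + ε_f. Then 0 ≤ ⟨C, X⟩ − min_{X' ∈ 𝒞} ⟨C, X'⟩ ≤ ε_f + 2‖W‖_op·R. -/
/-! For `X ⪰ 0` one has `|⟨W, X⟩| ≤ ‖W‖_op tr X`: write `X = ∑ vᵢ vᵢᴴ`, so that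
`⟨W, X⟩ = ∑ ⟨W vᵢ, vᵢ⟩`, and bound each term by Cauchy–Schwarz and `‖W v‖ ≤ ‖W‖_op ‖v‖`, which is
the Loewner inequality `WᴴW ⪯ ‖W‖_op² I`. On `𝒞` the two objectives `⟨C, ·⟩` and `⟨C + W, ·⟩`
therefore differ by at most `‖W‖_op R`, hence so do their minima, and the gap of `X` for `C`
exceeds its gap for `C + W` by at most `2 ‖W‖_op R`. -/

open scoped Matrix BigOperators ComplexOrder
open MeasureTheory ProbabilityTheory

noncomputable section

namespace SmoothedBM

variable {𝕂 : Type*} [RCLike 𝕂]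

/-- Real Frobenius inner product `⟨A,B⟩ = Re tr(Aᴴ B)`. -/
def finner {n k : ℕ} (A B : Matrix (Fin n) (Fin k) 𝕂) : ℝ :=
  RCLike.re (Matrix.trace (Aᴴ * B))

/-- Frobenius norm. -/
def fnorm {n k : ℕ} (A : Matrix (Fin n) (Fin k) 𝕂) : ℝ :=
  Real.sqrt (finner A A)

/-- Spectral (operator) norm: the largest singular value, i.e. the square root of the
largest eigenvalue of `Aᴴ * A`. -/
def opNorm {n k : ℕ} (A : Matrix (Fin n) (Fin k) 𝕂) : ℝ :=
  ⨆ i, Real.sqrt ((Matrix.isHermitian_conjTranspose_mul_self A).eigenvalues i)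

/-- The `k`-th (smallest) singular value of an `n × k` matrix: the square root of the
smallest eigenvalue of `Yᴴ * Y`.  (It is `0` when `k > n`.) -/
def sigmaLast {n k : ℕ} (Y : Matrix (Fin n) (Fin k) 𝕂) : ℝ :=
  Real.sqrt (⨅ i, (Matrix.isHermitian_conjTranspose_mul_self Y).eigenvalues i)

/-- Squared singular values of an `n × n` matrix, sorted in increasing order
(eigenvalues of `Aᴴ * A`, sorted). -/
def svSqAsc {n : ℕ} (A : Matrix (Fin n) (Fin n) 𝕂) : Fin n → ℝ := fun i =>
  (Matrix.isHermitian_conjTranspose_mul_self A).eigenvalues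
    (Tuple.sort ((Matrix.isHermitian_conjTranspose_mul_self A).eigenvalues) i)

/-- Sum of the squares of the `k` smallest singular values of an `n × n` matrix. -/
def sumSqSmallestSV {n : ℕ} (k : ℕ) (A : Matrix (Fin n) (Fin n) 𝕂) : ℝ :=
  ∑ i : Fin n, if (i : ℕ) < k then svSqAsc A i else 0

open Classical in
/-- Smallest eigenvalue of a self-adjoint matrix (junk value `0` if not self-adjoint). -/
def lambdaMin {n : ℕ} (A : Matrix (Fin n) (Fin n) 𝕂) : ℝ :=
  if hA : A.IsHermitian then ⨅ i, hA.eigenvalues i else 0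

open Classical in
/-- Number of eigenvalues of a self-adjoint matrix lying in a set `I ⊆ ℝ`
(junk value `0` if not self-adjoint). -/
def eigCountIn {n : ℕ} (A : Matrix (Fin n) (Fin n) 𝕂) (I : Set ℝ) : ℕ :=
  if hA : A.IsHermitian then (Finset.univ.filter fun i => hA.eigenvalues i ∈ I).card else 0

variable {n m k : ℕ}

/-- The constraint map `𝒜(Z)ᵢ = ⟨Aᵢ, Z⟩`. -/
def calA (A : Fin m → Matrix (Fin n) (Fin n) 𝕂) (Z : Matrix (Fin n) (Fin n) 𝕂) :
    Fin m → ℝ := fun i => finner (A i) Z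

/-- The adjoint map `𝒜*(μ) = ∑ᵢ μᵢ Aᵢ`. -/
def calAstar (A : Fin m → Matrix (Fin n) (Fin n) 𝕂) (μ : Fin m → ℝ) :
    Matrix (Fin n) (Fin n) 𝕂 := ∑ i, (μ i : 𝕂) • A i

/-- The SDP feasible set `𝒞`. -/
def SDPSet (A : Fin m → Matrix (Fin n) (Fin n) 𝕂) (b : Fin m → ℝ) :
    Set (Matrix (Fin n) (Fin n) 𝕂) :=
  {X | X.PosSemidef ∧ ∀ i, finner (A i) X = b i}

/-- The factorized feasible set `ℳ_k`. -/
def FactSet (A : Fin m → Matrix (Fin n) (Fin n) 𝕂) (b : Fin m → ℝ) (k : ℕ) :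
    Set (Matrix (Fin n) (Fin k) 𝕂) :=
  {Y | ∀ i, finner (A i) (Y * Yᴴ) = b i}

/-- The Gram matrix `G(Y)ᵢⱼ = ⟨AᵢY, AⱼY⟩`. -/
def gram (A : Fin m → Matrix (Fin n) (Fin n) 𝕂) (Y : Matrix (Fin n) (Fin k) 𝕂) :
    Matrix (Fin m) (Fin m) ℝ :=
  Matrix.of fun i j => finner (A i * Y) (A j * Y)

/-- The four Moore–Penrose identities. -/
def IsMoorePenrose {m : ℕ} (G H : Matrix (Fin m) (Fin m) ℝ) : Prop :=
  G * H * G = G ∧ H * G * H = H ∧ (G * H)ᵀ = G * H ∧ (H * G)ᵀ = H * G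

open Classical in
/-- The Moore–Penrose pseudo-inverse (the unique matrix satisfying the four
Moore–Penrose identities; junk value `0` if none exists). -/
def pinv {m : ℕ} (G : Matrix (Fin m) (Fin m) ℝ) : Matrix (Fin m) (Fin m) ℝ :=
  if h : ∃ H, IsMoorePenrose G H then h.choose else 0

/-- The matrix `S(Y) = C − 𝒜*(G(Y)† 𝒜(C Y Yᴴ))`. -/
def Smat (A : Fin m → Matrix (Fin n) (Fin n) 𝕂) (C : Matrix (Fin n) (Fin n) 𝕂)
    (Y : Matrix (Fin n) (Fin k) 𝕂) : Matrix (Fin n) (Fin n) 𝕂 :=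
  C - calAstar A (pinv (gram A Y) *ᵥ calA A (C * (Y * Yᴴ)))

/-- `Y` is an `εg`-approximate first-order stationary point of the factorized problem. -/
def IsFOSP (A : Fin m → Matrix (Fin n) (Fin n) 𝕂) (b : Fin m → ℝ)
    (C : Matrix (Fin n) (Fin n) 𝕂) (Y : Matrix (Fin n) (Fin k) 𝕂) (εg : ℝ) : Prop :=
  Y ∈ FactSet A b k ∧ fnorm ((2 : 𝕂) • (Smat A C Y * Y)) ≤ εg

/-- `Y` is an `(εg, εH)`-approximate second-order stationary point of the factorized problem. -/
def IsSOSP (A : Fin m → Matrix (Fin n) (Fin n) 𝕂) (b : Fin m → ℝ)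
    (C : Matrix (Fin n) (Fin n) 𝕂) (Y : Matrix (Fin n) (Fin k) 𝕂) (εg εH : ℝ) : Prop :=
  IsFOSP A b C Y εg ∧
    ∀ V : Matrix (Fin n) (Fin k) 𝕂, (∀ i, finner (A i * Y) V = 0) →
      -εH * (fnorm V) ^ 2 ≤ finner V (Smat A C Y * V)

/-- The smooth-manifold assumption (Assumption 1). -/
def SmoothAssumption (A : Fin m → Matrix (Fin n) (Fin n) 𝕂) (b : Fin m → ℝ) : Prop :=
  ∀ k' : ℕ, k' ≤ n → (FactSet A b k').Nonempty →
    (∀ Y ∈ FactSet A b k', LinearIndependent ℝ fun i => A i * Y) ∨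
    (∃ U : Set (Matrix (Fin n) (Fin k') 𝕂), IsOpen U ∧ FactSet A b k' ⊆ U ∧
      ∃ d : ℕ, ∀ Y ∈ U,
        Module.finrank ℝ (Submodule.span ℝ (Set.range fun i => A i * Y)) = d)

/-- A real Gaussian Wigner matrix with variance `σ²`: a random real symmetric matrix whose
on-and-above-diagonal entries are independent centered Gaussians `N(0, σ²)`. -/
structure IsRealWigner {Ω : Type*} [MeasurableSpace Ω] (μ : Measure Ω) {n : ℕ} (σ : ℝ)
    (W : Ω → Matrix (Fin n) (Fin n) ℝ) : Prop where
  symm : ∀ ω, (W ω)ᵀ = W ω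
  meas : ∀ i j, Measurable fun ω => W ω i j
  indep : iIndepFun (m := fun _ : {p : Fin n × Fin n // p.1 ≤ p.2} => inferInstance)
    (fun p ω => W ω p.val.1 p.val.2) μ
  gauss : ∀ i j : Fin n, i ≤ j →
    Measure.map (fun ω => W ω i j) μ = gaussianReal 0 ⟨σ ^ 2, sq_nonneg σ⟩

/-- The independent real coordinates of a complex Hermitian random matrix:
diagonal entries, and real/imaginary parts of the above-diagonal entries. -/
def wignerParts {Ω : Type*} {n : ℕ} (W : Ω → Matrix (Fin n) (Fin n) ℂ) :
    (Fin n ⊕ {p : Fin n × Fin n // p.1 < p.2} × Bool) → Ω → ℝ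
  | Sum.inl i => fun ω => (W ω i i).re
  | Sum.inr (p, false) => fun ω => (W ω p.val.1 p.val.2).re
  | Sum.inr (p, true) => fun ω => (W ω p.val.1 p.val.2).im

/-- A complex Gaussian Wigner matrix with variance `σ²`: a random Hermitian matrix whose
on-and-above-diagonal entries are independent, the diagonal entries being real `N(0, σ²)` and
the above-diagonal entries having independent `N(0, σ²/2)` real and imaginary parts. -/
structure IsComplexWigner {Ω : Type*} [MeasurableSpace Ω] (μ : Measure Ω) {n : ℕ} (σ : ℝ)
    (W : Ω → Matrix (Fin n) (Fin n) ℂ) : Prop where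
  herm : ∀ ω, (W ω).IsHermitian
  meas : ∀ i j, Measurable fun ω => W ω i j
  indep : iIndepFun (m := fun _ : Fin n ⊕ {p : Fin n × Fin n // p.1 < p.2} × Bool => inferInstance)
    (wignerParts W) μ
  diag : ∀ i : Fin n,
    Measure.map (fun ω => (W ω i i).re) μ = gaussianReal 0 ⟨σ ^ 2, sq_nonneg σ⟩
  off_re : ∀ i j : Fin n, i < j →
    Measure.map (fun ω => (W ω i j).re) μ = gaussianReal 0 ⟨σ ^ 2 / 2, by positivity⟩
  off_im : ∀ i j : Fin n, i < j →
    Measure.map (fun ω => (W ω i j).im) μ = gaussianReal 0 ⟨σ ^ 2 / 2, by positivity⟩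

lemma _root_.Matrix.IsHermitian.posSemidef_smul_one_sub {ι : Type*} [Fintype ι] [DecidableEq ι]
    {A : Matrix ι ι 𝕂} (hA : A.IsHermitian) {c : ℝ} (hc : ∀ i, hA.eigenvalues i ≤ c) :
    ((c : 𝕂) • 1 - A).PosSemidef := by
  set U : Matrix ι ι 𝕂 := (hA.eigenvectorUnitary : Matrix ι ι 𝕂)
  have hU : U * star U = 1 := Unitary.mul_star_self_of_mem hA.eigenvectorUnitary.2
  have hdiag : (c : 𝕂) • 1 - A =
      U * Matrix.diagonal (fun i => ((c - hA.eigenvalues i : ℝ) : 𝕂)) * star U := by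
    have hsub : Matrix.diagonal (fun i => ((c - hA.eigenvalues i : ℝ) : 𝕂)) =
        (c : 𝕂) • 1 - Matrix.diagonal (RCLike.ofReal ∘ hA.eigenvalues) := by
      ext i j
      by_cases h : i = j <;> simp [h, Algebra.algebraMap_eq_smul_one, sub_smul]
    rw [hsub, Matrix.mul_sub, Matrix.sub_mul, Matrix.mul_smul, Matrix.mul_one, Matrix.smul_mul, hU]
    conv_lhs => rw [hA.spectral_theorem, Unitary.conjStarAlgAut_apply]
  rw [hdiag]
  exact (Matrix.PosSemidef.diagonal fun i => by simpa using hc i).mul_mul_conjTranspose_same U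

lemma opNorm_nonneg (W : Matrix (Fin n) (Fin k) 𝕂) : 0 ≤ opNorm W :=
  Real.iSup_nonneg fun _ => Real.sqrt_nonneg _

lemma eigenvalues_conjTranspose_mul_self_le_opNorm_sq (W : Matrix (Fin n) (Fin k) 𝕂) (i : Fin k) :
    (Matrix.isHermitian_conjTranspose_mul_self W).eigenvalues i ≤ opNorm W ^ 2 := by
  rw [← Real.sqrt_le_left (opNorm_nonneg W)]
  exact le_ciSup
    (f := fun j => Real.sqrt ((Matrix.isHermitian_conjTranspose_mul_self W).eigenvalues j))
    (Set.finite_range _).bddAbove i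

lemma norm_toLp_sq {ι : Type*} [Fintype ι] (x : ι → 𝕂) :
    ‖WithLp.toLp 2 x‖ ^ 2 = RCLike.re (star x ⬝ᵥ x) := by
  rw [@norm_sq_eq_re_inner 𝕂, EuclideanSpace.inner_toLp_toLp, dotProduct_comm]

lemma norm_toLp_mulVec_le_opNorm (W : Matrix (Fin n) (Fin k) 𝕂) (v : Fin k → 𝕂) :
    ‖WithLp.toLp 2 (W *ᵥ v)‖ ≤ opNorm W * ‖WithLp.toLp 2 v‖ := by
  have hloewner := ((Matrix.isHermitian_conjTranspose_mul_self W).posSemidef_smul_one_sub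
    (eigenvalues_conjTranspose_mul_self_le_opNorm_sq W)).dotProduct_mulVec_nonneg v
  rw [Matrix.sub_mulVec, Matrix.smul_mulVec, Matrix.one_mulVec, dotProduct_sub, dotProduct_smul,
    ← Matrix.mulVec_mulVec, Matrix.dotProduct_mulVec, ← Matrix.star_mulVec] at hloewner
  have hsq : ‖WithLp.toLp 2 (W *ᵥ v)‖ ^ 2 ≤ (opNorm W * ‖WithLp.toLp 2 v‖) ^ 2 := by
    rw [mul_pow, norm_toLp_sq, norm_toLp_sq]
    have hre := (RCLike.nonneg_iff.mp hloewner).1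
    rwa [map_sub, smul_eq_mul, RCLike.re_ofReal_mul, sub_nonneg] at hre
  exact (pow_le_pow_iff_left₀ (norm_nonneg _) (mul_nonneg (opNorm_nonneg W) (norm_nonneg _))
    two_ne_zero).mp hsq

lemma abs_finner_vecMulVec_le (W : Matrix (Fin n) (Fin n) 𝕂) (v : Fin n → 𝕂) :
    |finner W (Matrix.vecMulVec v (star v))| ≤
      opNorm W * RCLike.re (Matrix.vecMulVec v (star v)).trace := by
  have hinner : finner W (Matrix.vecMulVec v (star v)) =
      RCLike.re (inner 𝕂 (WithLp.toLp 2 (W *ᵥ v)) (WithLp.toLp 2 v)) := by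
    rw [finner, Matrix.mul_vecMulVec, Matrix.trace_vecMulVec, EuclideanSpace.inner_toLp_toLp,
      Matrix.star_mulVec, dotProduct_comm (Wᴴ *ᵥ v), Matrix.dotProduct_mulVec, dotProduct_comm]
  have htrace : RCLike.re (Matrix.vecMulVec v (star v)).trace = ‖WithLp.toLp 2 v‖ ^ 2 := by
    rw [Matrix.trace_vecMulVec, norm_toLp_sq, dotProduct_comm]
  rw [hinner, htrace]
  calc _ ≤ ‖WithLp.toLp 2 (W *ᵥ v)‖ * ‖WithLp.toLp 2 v‖ :=
        (RCLike.abs_re_le_norm _).trans (norm_inner_le_norm _ _)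
    _ ≤ opNorm W * ‖WithLp.toLp 2 v‖ * ‖WithLp.toLp 2 v‖ := by
        gcongr; exact norm_toLp_mulVec_le_opNorm W v
    _ = opNorm W * ‖WithLp.toLp 2 v‖ ^ 2 := by ring

lemma finner_sum_right {ι : Type*} (W : Matrix (Fin n) (Fin k) 𝕂) (s : Finset ι)
    (X : ι → Matrix (Fin n) (Fin k) 𝕂) : finner W (∑ i ∈ s, X i) = ∑ i ∈ s, finner W (X i) := by
  simp only [finner, Matrix.mul_sum, Matrix.trace_sum, map_sum]

lemma abs_finner_le_opNorm_mul_trace (W X : Matrix (Fin n) (Fin n) 𝕂) (hX : X.PosSemidef) :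
    |finner W X| ≤ opNorm W * RCLike.re X.trace := by
  obtain ⟨m, v, rfl⟩ := Matrix.posSemidef_iff_eq_sum_vecMulVec.mp hX
  rw [finner_sum_right, Matrix.trace_sum, map_sum, Finset.mul_sum]
  exact (Finset.abs_sum_le_sum_abs _ _).trans
    (Finset.sum_le_sum fun i _ => abs_finner_vecMulVec_le W (v i))

lemma finner_add_left (C W X : Matrix (Fin n) (Fin k) 𝕂) :
    finner (C + W) X = finner C X + finner W X := by
  rw [finner, finner, finner, Matrix.conjTranspose_add, Matrix.add_mul, Matrix.trace_add, map_add]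

lemma continuous_finner (C : Matrix (Fin n) (Fin k) 𝕂) :
    Continuous fun X : Matrix (Fin n) (Fin k) 𝕂 => finner C X :=
  RCLike.continuous_re.comp (continuous_const.matrix_mul continuous_id).matrix_trace

theorem perturbed_to_unperturbed_gap_general
    {𝕂 : Type*} [RCLike 𝕂] {n m : ℕ}
    (A : Fin m → Matrix (Fin n) (Fin n) 𝕂)
    (b : Fin m → ℝ)
    (hCne : (SDPSet A b).Nonempty) (hCcpt : IsCompact (SDPSet A b))
    (R : ℝ) (hR : ∀ X ∈ SDPSet A b, RCLike.re (Matrix.trace X) ≤ R)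
    (C W : Matrix (Fin n) (Fin n) 𝕂)
    (εf : ℝ)
    (X : Matrix (Fin n) (Fin n) 𝕂) (hX : X ∈ SDPSet A b)
    (hXopt : finner (C + W) X ≤
      sInf ((fun X' => finner (C + W) X') '' SDPSet A b) + εf) :
    0 ≤ finner C X - sInf ((fun X' => finner C X') '' SDPSet A b) ∧
    finner C X - sInf ((fun X' => finner C X') '' SDPSet A b) ≤
      εf + 2 * opNorm W * R := by
  have hbdd (D : Matrix (Fin n) (Fin n) 𝕂) : BddBelow ((fun X' => finner D X') '' SDPSet A b) :=
    (hCcpt.image (continuous_finner D)).bddBelow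
  have hWbound (Z : Matrix (Fin n) (Fin n) 𝕂) (hZ : Z ∈ SDPSet A b) :
      |finner W Z| ≤ opNorm W * R :=
    (abs_finner_le_opNorm_mul_trace W Z hZ.1).trans
      (mul_le_mul_of_nonneg_left (hR Z hZ) (opNorm_nonneg W))
  have hinf : sInf ((fun X' => finner (C + W) X') '' SDPSet A b) - opNorm W * R ≤
      sInf ((fun X' => finner C X') '' SDPSet A b) := by
    refine le_csInf (hCne.image _) ?_
    rintro _ ⟨Z, hZ, rfl⟩
    have hCW := csInf_le (hbdd (C + W)) (Set.mem_image_of_mem _ hZ)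
    have hWZ := (abs_le.mp (hWbound Z hZ)).2
    rw [finner_add_left] at hCW
    linarith
  refine ⟨sub_nonneg.mpr (csInf_le (hbdd C) (Set.mem_image_of_mem _ hX)), ?_⟩
  have hWX := (abs_le.mp (hWbound X hX)).1
  rw [finner_add_left] at hXopt
  linarith

/-- Corollary, deterministic part: an `εf`-approximate solution of the
perturbed SDP is an `(εf + 2‖W‖_op R)`-approximate solution of the unperturbed SDP. -/
theorem perturbed_to_unperturbed_gap
    {𝕂 : Type*} [RCLike 𝕂] {n m : ℕ} (hn : 0 < n) (hm : 0 < m)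
    (A : Fin m → Matrix (Fin n) (Fin n) 𝕂) (hA : ∀ i, (A i).IsHermitian)
    (b : Fin m → ℝ)
    (hCne : (SDPSet A b).Nonempty) (hCcpt : IsCompact (SDPSet A b))
    (R : ℝ) (hR : ∀ X ∈ SDPSet A b, RCLike.re (Matrix.trace X) ≤ R)
    (C W : Matrix (Fin n) (Fin n) 𝕂) (hC : C.IsHermitian) (hW : W.IsHermitian)
    (εf : ℝ) (hεf : 0 ≤ εf)
    (X : Matrix (Fin n) (Fin n) 𝕂) (hX : X ∈ SDPSet A b)
    (hXopt : finner (C + W) X ≤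
      sInf ((fun X' => finner (C + W) X') '' SDPSet A b) + εf) :
    0 ≤ finner C X - sInf ((fun X' => finner C X') '' SDPSet A b) ∧
    finner C X - sInf ((fun X' => finner C X') '' SDPSet A b) ≤
      εf + 2 * opNorm W * R :=
  perturbed_to_unperturbed_gap_general A b hCne hCcpt R hR C W εf X hX hXopt

end SmoothedBM
end
end

section
/- Let 𝕂 = ℝ or ℂ, let S be a self-adjoint n×n matrix over 𝕂, and let Y ∈ 𝕂^{n×k} with k ≤ n. Then ‖SY‖ ≥ σ_k(Y) · √(Σ_{i=1}^k σ_{n−(i−1)}(S)²), where ‖·‖ is the Frobenius norm, σ_k(Y) is the smallest singular value of Y, and σ_{n−(i−1)}(S) denotes the (n−i+1)-st largest singular value of S (so the sum is over the k smallest singular values of S). -/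
open scoped Matrix BigOperators ComplexOrder
open MeasureTheory ProbabilityTheory

noncomputable section

/-!
Diagonalise `Yᴴ Y = Σ_j μ_j v_j v_jᴴ`. The vectors `u_j = μ_j^{-1/2} Y v_j` are orthonormal and
`‖S Y‖² = Σ_j ‖S Y v_j‖² = Σ_j μ_j ‖S u_j‖² ≥ σ_k(Y)² Σ_j ‖S u_j‖²`. In an eigenbasis `e_i` of
`Sᴴ S` the last sum is `Σ_i λ_i w_i` with weights `w_i = Σ_j |⟪e_i, u_j⟫|²`, which lie in `[0, 1]`
by Bessel's inequality and add up to `k` by Parseval's identity; such a weighted sum is at least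
the sum of the `k` smallest `λ_i` (Ky Fan's minimum principle).
-/

open Finset Matrix
open scoped InnerProductSpace

theorem Fin.sum_ite_val_lt_le_sum_mul_of_monotone {n k : ℕ} {d w : Fin n → ℝ} (hd : Monotone d)
    (hw0 : ∀ i, 0 ≤ w i) (hw1 : ∀ i, w i ≤ 1) (hw : ∑ i, w i = k) :
    ∑ i : Fin n, (if (i : ℕ) < k then d i else 0) ≤ ∑ i, d i * w i := by
  rcases n.eq_zero_or_pos with rfl | hn
  · simp
  have hkn : k ≤ n := by
    have : ∑ i, w i ≤ ∑ _i : Fin n, (1 : ℝ) := sum_le_sum fun i _ => hw1 i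
    simp only [hw, sum_const, nsmul_eq_mul, mul_one] at this
    exact_mod_cast this
  have hcount : ∑ i : Fin n, (if (i : ℕ) < k then (1 : ℝ) else 0) = k := by
    rw [sum_boole, Fin.card_filter_val_lt, min_eq_right hkn]
  -- `t` separates the values of `d` on `i < k` from those on `i ≥ k`
  set t := d ⟨min (k - 1) (n - 1), by omega⟩
  have hterm (i : Fin n) : 0 ≤ (d i - t) * (w i - if (i : ℕ) < k then 1 else 0) := by
    split_ifs with hi
    · exact mul_nonneg_of_nonpos_of_nonpos (sub_nonpos.2 (hd (Fin.mk_le_mk.2 (by omega))))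
        (sub_nonpos.2 (hw1 i))
    · exact mul_nonneg (sub_nonneg.2 (hd (Fin.mk_le_mk.2 (by omega)))) (by simpa using hw0 i)
  have hexpand (i : Fin n) : (d i - t) * (w i - if (i : ℕ) < k then 1 else 0) =
      (d i * w i - if (i : ℕ) < k then d i else 0) - t * (w i - if (i : ℕ) < k then 1 else 0) := by
    split_ifs <;> ring
  have := sum_nonneg fun i (_ : i ∈ univ) => hterm i
  simp only [hexpand, sum_sub_distrib, ← mul_sum, hw, hcount, sub_self, mul_zero, sub_zero] at this
  linarith

theorem Fin.sum_ite_val_lt_sort_le_sum_mul {n k : ℕ} {d w : Fin n → ℝ} (hw0 : ∀ i, 0 ≤ w i)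
    (hw1 : ∀ i, w i ≤ 1) (hw : ∑ i, w i = k) :
    ∑ i : Fin n, (if (i : ℕ) < k then d (Tuple.sort d i) else 0) ≤ ∑ i, d i * w i := by
  set σ := Tuple.sort d
  calc _ ≤ ∑ i, d (σ i) * w (σ i) :=
        sum_ite_val_lt_le_sum_mul_of_monotone (Tuple.monotone_sort d) (fun i => hw0 _)
          (fun i => hw1 _) (by rwa [Equiv.sum_comp σ w])
    _ = ∑ i, d i * w i := Equiv.sum_comp σ fun i => d i * w i

namespace Matrix

variable {𝕂 : Type*} [RCLike 𝕂]

section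

variable {m n : Type*} [Fintype m] [Fintype n] [DecidableEq m] [DecidableEq n]

theorem inner_toEuclideanLin_toEuclideanLin (A : Matrix m n 𝕂) (x y : EuclideanSpace 𝕂 n) :
    ⟪toEuclideanLin A x, toEuclideanLin A y⟫_𝕂 = ⟪x, toEuclideanLin (Aᴴ * A) y⟫_𝕂 := by
  rw [toLpLin_mul_same, toEuclideanLin_conjTranspose_eq_adjoint, LinearMap.comp_apply,
    LinearMap.adjoint_inner_right]

theorem re_inner_toEuclideanLin_conjTranspose_mul_self (A : Matrix m n 𝕂)
    (x : EuclideanSpace 𝕂 n) :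
    RCLike.re ⟪x, toEuclideanLin (Aᴴ * A) x⟫_𝕂 = ‖toEuclideanLin A x‖ ^ 2 := by
  rw [← inner_toEuclideanLin_toEuclideanLin, inner_self_eq_norm_sq]

theorem re_trace_conjTranspose_mul_self_eq_sum_norm_sq {ι : Type*} [Fintype ι]
    (A : Matrix m n 𝕂) (b : OrthonormalBasis ι 𝕂 (EuclideanSpace 𝕂 n)) :
    RCLike.re (Aᴴ * A).trace = ∑ j, ‖toEuclideanLin A (b j)‖ ^ 2 := by
  rw [← trace_toLin_eq _ (PiLp.basisFun 2 𝕂 n), ← toLpLin_eq_toLin,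
    LinearMap.trace_eq_sum_inner _ b, map_sum]
  simp only [re_inner_toEuclideanLin_conjTranspose_mul_self]

namespace IsHermitian

variable {T : Matrix n n 𝕂} (hT : T.IsHermitian)
include hT

theorem toEuclideanLin_eigenvectorBasis (i : n) :
    toEuclideanLin T (hT.eigenvectorBasis i) = hT.eigenvalues i • hT.eigenvectorBasis i := by
  rw [toLpLin_apply, hT.mulVec_eigenvectorBasis, WithLp.toLp_smul, WithLp.toLp_ofLp]

theorem re_inner_toEuclideanLin_self (x : EuclideanSpace 𝕂 n) :
    RCLike.re ⟪x, toEuclideanLin T x⟫_𝕂 =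
      ∑ i, hT.eigenvalues i * ‖⟪hT.eigenvectorBasis i, x⟫_𝕂‖ ^ 2 := by
  rw [← hT.eigenvectorBasis.sum_inner_mul_inner, map_sum]
  refine sum_congr rfl fun i _ => ?_
  rw [← isSymmetric_toEuclideanLin_iff.mpr hT, toEuclideanLin_eigenvectorBasis,
    RCLike.real_smul_eq_coe_smul (K := 𝕂), inner_smul_left, RCLike.conj_ofReal,
    ← inner_conj_symm x, mul_left_comm, RCLike.conj_mul]
  norm_cast

end IsHermitian

theorem inner_toEuclideanLin_eigenvectorBasis_conjTranspose_mul_self (Y : Matrix m n 𝕂)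
    (i j : n) :
    ⟪toEuclideanLin Y ((isHermitian_conjTranspose_mul_self Y).eigenvectorBasis i),
      toEuclideanLin Y ((isHermitian_conjTranspose_mul_self Y).eigenvectorBasis j)⟫_𝕂 =
      if i = j then ((isHermitian_conjTranspose_mul_self Y).eigenvalues j : 𝕂) else 0 := by
  set hG := isHermitian_conjTranspose_mul_self Y
  rw [inner_toEuclideanLin_toEuclideanLin, hG.toEuclideanLin_eigenvectorBasis,
    RCLike.real_smul_eq_coe_smul (K := 𝕂), inner_smul_right,
    orthonormal_iff_ite.mp hG.eigenvectorBasis.orthonormal i j]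
  split_ifs <;> simp

theorem orthonormal_inv_sqrt_smul_toEuclideanLin_eigenvectorBasis (Y : Matrix m n 𝕂)
    (hμ : ∀ j, 0 < (isHermitian_conjTranspose_mul_self Y).eigenvalues j) :
    Orthonormal 𝕂 fun j => (√((isHermitian_conjTranspose_mul_self Y).eigenvalues j))⁻¹ •
      toEuclideanLin Y ((isHermitian_conjTranspose_mul_self Y).eigenvectorBasis j) := by
  rw [orthonormal_iff_ite]
  intro i j
  simp only [RCLike.real_smul_eq_coe_smul (K := 𝕂), inner_smul_left, inner_smul_right,
    RCLike.conj_ofReal,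
    inner_toEuclideanLin_eigenvectorBasis_conjTranspose_mul_self]
  split_ifs with h
  · subst h
    norm_cast
    rw [← mul_assoc, ← mul_inv, Real.mul_self_sqrt (hμ i).le, inv_mul_cancel₀ (hμ i).ne']
  · simp

end

theorem IsHermitian.sum_ite_val_lt_sort_eigenvalues_le {n k : ℕ}
    {T : Matrix (Fin n) (Fin n) 𝕂} (hT : T.IsHermitian) {u : Fin k → EuclideanSpace 𝕂 (Fin n)}
    (hu : Orthonormal 𝕂 u) :
    ∑ i : Fin n, (if (i : ℕ) < k then hT.eigenvalues (Tuple.sort hT.eigenvalues i) else 0) ≤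
      ∑ j, RCLike.re ⟪u j, toEuclideanLin T (u j)⟫_𝕂 := by
  set e := hT.eigenvectorBasis
  have hweight_le_one (i : Fin n) : ∑ j, ‖⟪e i, u j⟫_𝕂‖ ^ 2 ≤ 1 := by
    simpa [norm_inner_symm (e i), e.orthonormal.1 i] using
      hu.sum_inner_products_le (s := univ) (e i)
  have hweight_sum : ∑ i, ∑ j, ‖⟪e i, u j⟫_𝕂‖ ^ 2 = k := by
    rw [sum_comm]
    simp [e.sum_sq_norm_inner_right, hu.1]
  calc _ ≤ ∑ i, hT.eigenvalues i * ∑ j, ‖⟪e i, u j⟫_𝕂‖ ^ 2 :=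
        Fin.sum_ite_val_lt_sort_le_sum_mul (fun i => by positivity) hweight_le_one hweight_sum
    _ = _ := by
      simp_rw [hT.re_inner_toEuclideanLin_self, mul_sum]
      exact sum_comm

end Matrix

namespace SmoothedBM

variable {𝕂 : Type*} [RCLike 𝕂] {n k : ℕ}

theorem sumSqSmallestSV_nonneg (S : Matrix (Fin n) (Fin n) 𝕂) : 0 ≤ sumSqSmallestSV k S :=
  sum_nonneg fun i _ => by
    split_ifs
    · exact (posSemidef_conjTranspose_mul_self S).eigenvalues_nonneg _
    · rfl

theorem sumSqSmallestSV_le_sum_norm_sq (S : Matrix (Fin n) (Fin n) 𝕂)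
    {u : Fin k → EuclideanSpace 𝕂 (Fin n)} (hu : Orthonormal 𝕂 u) :
    sumSqSmallestSV k S ≤ ∑ j, ‖toEuclideanLin S (u j)‖ ^ 2 :=
  ((isHermitian_conjTranspose_mul_self S).sum_ite_val_lt_sort_eigenvalues_le hu).trans_eq <|
    sum_congr rfl fun j _ => re_inner_toEuclideanLin_conjTranspose_mul_self S (u j)

theorem mul_sumSqSmallestSV_le_finner (S : Matrix (Fin n) (Fin n) 𝕂)
    (Y : Matrix (Fin n) (Fin k) 𝕂) {c : ℝ}
    (hc : ∀ j, c ≤ (isHermitian_conjTranspose_mul_self Y).eigenvalues j) :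
    c * sumSqSmallestSV k S ≤ finner (S * Y) (S * Y) := by
  set hG := isHermitian_conjTranspose_mul_self Y
  set μ := hG.eigenvalues
  rw [finner, re_trace_conjTranspose_mul_self_eq_sum_norm_sq (S * Y) hG.eigenvectorBasis]
  rcases le_or_gt c 0 with hc0 | hc0
  · exact (mul_nonpos_of_nonpos_of_nonneg hc0 (sumSqSmallestSV_nonneg S)).trans (by positivity)
  have hμ (j : Fin k) : 0 < μ j := hc0.trans_le (hc j)
  set u := fun j => (√(μ j))⁻¹ • toEuclideanLin Y (hG.eigenvectorBasis j)
  have hu : Orthonormal 𝕂 u := orthonormal_inv_sqrt_smul_toEuclideanLin_eigenvectorBasis Y hμ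
  have hYv (j : Fin k) : toEuclideanLin Y (hG.eigenvectorBasis j) = √(μ j) • u j :=
    (smul_inv_smul₀ (Real.sqrt_pos.2 (hμ j)).ne' _).symm
  clear_value u
  calc c * sumSqSmallestSV k S ≤ c * ∑ j, ‖toEuclideanLin S (u j)‖ ^ 2 :=
        mul_le_mul_of_nonneg_left (sumSqSmallestSV_le_sum_norm_sq S hu) hc0.le
    _ ≤ ∑ j, μ j * ‖toEuclideanLin S (u j)‖ ^ 2 := by
        rw [mul_sum]
        gcongr with j
        exact hc j
    _ = ∑ j, ‖toEuclideanLin (S * Y) (hG.eigenvectorBasis j)‖ ^ 2 := by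
        refine sum_congr rfl fun j _ => ?_
        rw [toLpLin_mul_same, LinearMap.comp_apply, hYv, LinearMap.map_smul_of_tower, norm_smul,
          mul_pow, Real.norm_eq_abs, sq_abs, Real.sq_sqrt (hμ j).le]

theorem frobenius_lower_bound_smallest_singular_values_general
    {𝕂 : Type*} [RCLike 𝕂] {n k : ℕ}
    (S : Matrix (Fin n) (Fin n) 𝕂)
    (Y : Matrix (Fin n) (Fin k) 𝕂) :
    sigmaLast Y * Real.sqrt (sumSqSmallestSV k S) ≤ fnorm (S * Y) := by
  have hY := posSemidef_conjTranspose_mul_self Y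
  rw [sigmaLast, fnorm, ← Real.sqrt_mul (Real.iInf_nonneg hY.eigenvalues_nonneg)]
  exact Real.sqrt_le_sqrt <| mul_sumSqSmallestSV_le_finner S Y fun j =>
    ciInf_le (Set.finite_range _).bddBelow j

/-- for self-adjoint `S` (n×n) and `Y` (n×k), `k ≤ n`,
`‖SY‖ ≥ σ_k(Y) · √(Σ_{i=1}^k σ_{n-(i-1)}(S)²)`. -/
theorem frobenius_lower_bound_smallest_singular_values
    {𝕂 : Type*} [RCLike 𝕂] {n k : ℕ} (hk : 1 ≤ k) (hkn : k ≤ n)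
    (S : Matrix (Fin n) (Fin n) 𝕂) (hS : S.IsHermitian)
    (Y : Matrix (Fin n) (Fin k) 𝕂) :
    sigmaLast Y * Real.sqrt (sumSqSmallestSV k S) ≤ fnorm (S * Y) :=
  frobenius_lower_bound_smallest_singular_values_general S Y

end SmoothedBM
end
end
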